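/- (Proposition 2, enhanced upper bound.) Let u₁, u₂ be real numbers with u₁ ≥ u₂ and set δ = u₁ − u₂. Let l_δ, u_δ, l_θ, u_θ, θ be real numbers with 0 ≤ l_δ ≤ δ ≤ u_δ and 0 < l_θ ≤ θ ≤ u_θ. Then u₁·Φ(δ/θ) + u₂·Φ(−δ/θ) + θ·φ(δ/θ) ≤ u₁·Φ(u_δ/l_θ) + u₂·(1 − Φ(u_δ/l_θ)) + u_θ·φ(l_δ/u_θ). -/

import Mathlib

open MeasureTheory ProbabilityTheory Real

/-- Standard normal p.d.f. -/
noncomputable def phi (w : ℝ) : ℝ := (1 / Real.sqrt (2 * Real.pi)) * Real.exp (-w ^ 2 / 2)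

/-- Standard normal c.d.f. -/
noncomputable def Phi (w : ℝ) : ℝ := ∫ u in Set.Iic w, phi u

lemma phi_eq_gaussianPDFReal : phi = gaussianPDFReal 0 1 := by
  ext w
  simp [phi, gaussianPDFReal]

lemma phi_nonneg (w : ℝ) : 0 ≤ phi w := by
  rw [phi_eq_gaussianPDFReal]
  exact gaussianPDFReal_nonneg 0 1 w

lemma integrable_phi : Integrable phi := by
  rw [phi_eq_gaussianPDFReal]
  exact integrable_gaussianPDFReal 0 1

lemma integral_phi : ∫ w, phi w = 1 := by
  rw [phi_eq_gaussianPDFReal]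
  exact integral_gaussianPDFReal_eq_one 0 one_ne_zero

lemma phi_neg (w : ℝ) : phi (-w) = phi w := by
  simp only [phi, neg_sq]

lemma phi_le_phi_of_le {a b : ℝ} (ha : 0 ≤ a) (hab : a ≤ b) : phi b ≤ phi a := by
  unfold phi
  gcongr

lemma Phi_mono : Monotone Phi := fun _ _ hab =>
  setIntegral_mono_set integrable_phi.integrableOn (.of_forall phi_nonneg)
    (.of_forall fun _ hx => le_trans hx hab)

lemma Phi_neg (w : ℝ) : Phi (-w) = 1 - Phi w := by
  have h_tail : Phi (-w) = ∫ u in Set.Ioi w, phi u := by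
    rw [Phi, ← integral_comp_neg_Ioi]
    simp only [phi_neg]
  have h_split : Phi w + ∫ u in Set.Ioi w, phi u = 1 := by
    rw [Phi, intervalIntegral.integral_Iic_add_Ioi integrable_phi.integrableOn
      integrable_phi.integrableOn, integral_phi]
  linarith

theorem enhanced_upper_bound
    (u₁ u₂ lδ uδ lθ uθ θ : ℝ) (h12 : u₂ ≤ u₁)
    (hlδ : 0 ≤ lδ) (hδl : lδ ≤ u₁ - u₂) (hδu : u₁ - u₂ ≤ uδ)
    (hlθ : 0 < lθ) (hθl : lθ ≤ θ) (hθu : θ ≤ uθ) :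
    u₁ * Phi ((u₁ - u₂) / θ) + u₂ * Phi (-(u₁ - u₂) / θ) + θ * phi ((u₁ - u₂) / θ)
      ≤ u₁ * Phi (uδ / lθ) + u₂ * (1 - Phi (uδ / lθ)) + uθ * phi (lδ / uθ) := by
  have hθ : 0 < θ := hlθ.trans_le hθl
  have huθ : 0 < uθ := hθ.trans_le hθu
  have hδ : 0 ≤ u₁ - u₂ := sub_nonneg.mpr h12
  have hΦ : Phi ((u₁ - u₂) / θ) ≤ Phi (uδ / lθ) :=
    Phi_mono (div_le_div₀ (hδ.trans hδu) hδu hlθ hθl)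
  have hφ : phi ((u₁ - u₂) / θ) ≤ phi (lδ / uθ) :=
    phi_le_phi_of_le (div_nonneg hlδ huθ.le) (div_le_div₀ hδ hδl hθ hθu)
  have hθφ : θ * phi ((u₁ - u₂) / θ) ≤ uθ * phi (lδ / uθ) :=
    mul_le_mul hθu hφ (phi_nonneg _) huθ.le
  -- with δ = u₁ - u₂ and `Phi_neg`, each side has the form u₂ + δ * Phi _ + _ * phi _
  rw [neg_div, Phi_neg]
  linarith [mul_le_mul_of_nonneg_left hΦ hδ]
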